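/- arXiv:1611.07593 — 2 statements merged into one kernel-verified Lean document; each statement's English description precedes it below -/
import Mathlib

section
/- Let H = [[ω13·I, -W], [-Wᵀ, ω24·I]] be positive definite with ω13, ω24 > 0. Then the alternating updates z_t ← (ω1 φ + W z_s)/ω13 and z_s ← (ω2 ψ + Wᵀ z_t)/ω24 form a contraction on ℝ^{d_t} × ℝ^{d_s}: specifically the composed map z_s ↦ (ω2 ψ + Wᵀ(ω1 φ + W z_s)/ω13)/ω24 is Lipschitz with constant ‖W‖²/(ω13·ω24) < 1, and hence the alternating optimization converges to the unique global optimum. -/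
/-!
Testing positive definiteness of `H` on the vector `(W x / ω13, x)` gives
`‖W x‖² < ω13 ω24 ‖x‖²` for every `x ≠ 0`; since the operator norm is attained on the compact
unit sphere, this yields the strict bound `‖W‖² < ω13 ω24`. The composed update is affine with
linear part `(ω13 ω24)⁻¹ Wᵀ W`, whose norm is `‖W‖² / (ω13 ω24)` by the C⋆-identity, so it is a
contraction and Banach's fixed point theorem applies.
-/

open Matrix

noncomputable def opNorm {m n : ℕ} (W : Matrix (Fin m) (Fin n) ℝ) : ℝ :=
  ‖LinearMap.toContinuousLinearMap (Matrix.toEuclideanLin W)‖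

/-- Interpret a plain vector as a point of Euclidean space. -/
noncomputable def toEuc {n : ℕ} (v : Fin n → ℝ) : EuclideanSpace ℝ (Fin n) :=
  (WithLp.equiv 2 (Fin n → ℝ)).symm v

open scoped InnerProduct

theorem ContinuousLinearMap.opNorm_lt_of_forall_norm_apply_lt {E F : Type*}
    [NormedAddCommGroup E] [NormedSpace ℝ E] [FiniteDimensional ℝ E]
    [SeminormedAddCommGroup F] [NormedSpace ℝ F] (f : E →L[ℝ] F) {c : ℝ} (hc : 0 < c)
    (h : ∀ x ≠ 0, ‖f x‖ < c * ‖x‖) : ‖f‖ < c := by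
  cases subsingleton_or_nontrivial E
  · rwa [Subsingleton.elim f 0, norm_zero]
  have hsphere : (Metric.sphere (0 : E) 1).Nonempty :=
    NormedSpace.sphere_nonempty.mpr zero_le_one
  have himage : IsCompact ((fun x => ‖f x‖) '' Metric.sphere 0 1) :=
    (isCompact_sphere 0 1).image (by fun_prop)
  obtain ⟨x, hx, hfx⟩ := himage.sSup_mem (hsphere.image _)
  rw [f.sSup_sphere_eq_norm] at hfx
  have hx1 : ‖x‖ = 1 := by simpa using hx
  simpa [← hfx, hx1] using h x (norm_ne_zero_iff.mp (by simp [hx1]))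

theorem Matrix.dotProduct_mulVec_self_lt_of_posDef_fromBlocks {m n : Type*}
    [Fintype m] [Fintype n] [DecidableEq m] [DecidableEq n] {W : Matrix m n ℝ} {a b : ℝ}
    (ha : 0 < a) (hH : (fromBlocks (a • 1) (-W) (-Wᵀ) (b • 1)).PosDef) {x : n → ℝ}
    (hx : x ≠ 0) : (W *ᵥ x) ⬝ᵥ (W *ᵥ x) < a * b * (x ⬝ᵥ x) := by
  set u := a⁻¹ • (W *ᵥ x)
  have hv : Sum.elim u x ≠ 0 := fun h => hx (funext fun i => congrFun h (Sum.inr i))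
  have hHv : fromBlocks (a • 1) (-W) (-Wᵀ) (b • 1) *ᵥ Sum.elim u x =
      Sum.elim (0 : m → ℝ) (b • x - Wᵀ *ᵥ u) := by
    rw [fromBlocks_mulVec]
    congr 1
    · simp only [Sum.elim_comp_inl, Sum.elim_comp_inr, neg_mulVec, smul_mulVec, one_mulVec, u,
        smul_smul, mul_inv_cancel₀ ha.ne', one_smul, add_neg_cancel]
    · simp only [Sum.elim_comp_inl, Sum.elim_comp_inr, neg_mulVec, smul_mulVec, one_mulVec]
      abel
  have key := hH.dotProduct_mulVec_pos hv
  rw [hHv, star_trivial, sumElim_dotProduct_sumElim, dotProduct_zero, zero_add, dotProduct_sub,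
    dotProduct_smul, dotProduct_mulVec, vecMul_transpose, dotProduct_comm, dotProduct_smul] at key
  simp only [smul_eq_mul] at key
  have := mul_pos ha key
  rw [mul_sub, ← mul_assoc, ← mul_assoc, mul_inv_cancel₀ ha.ne', one_mul] at this
  linarith

theorem EuclideanSpace.norm_sq_eq_dotProduct {ι : Type*} [Fintype ι] (x : EuclideanSpace ℝ ι) :
    ‖x‖ ^ 2 = x.ofLp ⬝ᵥ x.ofLp := by
  rw [← real_inner_self_eq_norm_sq, EuclideanSpace.inner_eq_star_dotProduct, star_trivial]

noncomputable def euclideanCLM {m n : ℕ} (W : Matrix (Fin m) (Fin n) ℝ) :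
    EuclideanSpace ℝ (Fin n) →L[ℝ] EuclideanSpace ℝ (Fin m) :=
  LinearMap.toContinuousLinearMap (Matrix.toEuclideanLin W)

section euclideanCLM

variable {m n : ℕ} (W : Matrix (Fin m) (Fin n) ℝ)

theorem opNorm_eq_norm_euclideanCLM : opNorm W = ‖euclideanCLM W‖ := rfl

theorem euclideanCLM_transpose : euclideanCLM Wᵀ = (euclideanCLM W)† := by
  rw [euclideanCLM, ← conjTranspose_eq_transpose_of_trivial,
    toEuclideanLin_conjTranspose_eq_adjoint, LinearMap.adjoint_toContinuousLinearMap]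
  rfl

theorem norm_euclideanCLM_apply_sq (z : EuclideanSpace ℝ (Fin n)) :
    ‖euclideanCLM W z‖ ^ 2 = (W *ᵥ z) ⬝ᵥ (W *ᵥ z) :=
  EuclideanSpace.norm_sq_eq_dotProduct _

theorem opNorm_sq_lt_of_posDef_fromBlocks {a b : ℝ} (ha : 0 < a) (hb : 0 < b)
    (hH : (fromBlocks (a • 1) (-W) (-Wᵀ) (b • 1)).PosDef) : opNorm W ^ 2 < a * b := by
  have hab : 0 < a * b := mul_pos ha hb
  suffices ‖euclideanCLM W‖ < √(a * b) by
    rwa [opNorm_eq_norm_euclideanCLM, ← Real.lt_sqrt (norm_nonneg _)]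
  refine (euclideanCLM W).opNorm_lt_of_forall_norm_apply_lt (Real.sqrt_pos.mpr hab)
    fun z hz => ?_
  have hz' : z.ofLp ≠ 0 := by simpa using hz
  rw [← Real.sqrt_sq (norm_nonneg z), ← Real.sqrt_mul hab.le, Real.lt_sqrt (norm_nonneg _),
    norm_euclideanCLM_apply_sq, EuclideanSpace.norm_sq_eq_dotProduct]
  exact dotProduct_mulVec_self_lt_of_posDef_fromBlocks ha hH hz'

end euclideanCLM

theorem lipschitzWith_alternating_update {dt ds : ℕ} (W : Matrix (Fin dt) (Fin ds) ℝ)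
    (φ : EuclideanSpace ℝ (Fin dt)) (ψ : EuclideanSpace ℝ (Fin ds)) {ω1 ω2 ω13 ω24 : ℝ}
    (h13 : 0 < ω13) (h24 : 0 < ω24) {T : EuclideanSpace ℝ (Fin ds) → EuclideanSpace ℝ (Fin ds)}
    (hT : ∀ zs, T zs =
      ω24⁻¹ • (ω2 • ψ + toEuc (Wᵀ *ᵥ (ω13⁻¹ • (ω1 • φ + toEuc (W *ᵥ zs)))))) :
    LipschitzWith (Real.toNNReal (opNorm W ^ 2 / (ω13 * ω24))) T := by
  set A := euclideanCLM W
  have hT' : ∀ z, T z = ω24⁻¹ • (ω2 • ψ + (A†) (ω13⁻¹ • (ω1 • φ + A z))) := by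
    intro z
    rw [hT, ← euclideanCLM_transpose]
    rfl
  have hsub : ∀ x y, T x - T y = ((ω13 * ω24)⁻¹ • (A† ∘L A)) (x - y) := by
    intro x y
    simp only [hT', _root_.smul_apply, ContinuousLinearMap.comp_apply, map_sub, map_add,
      map_smul]
    module
  have hnorm : ‖(ω13 * ω24)⁻¹ • (A† ∘L A)‖ = opNorm W ^ 2 / (ω13 * ω24) := by
    rw [norm_smul, ContinuousLinearMap.norm_adjoint_comp_self, opNorm_eq_norm_euclideanCLM,
      norm_inv, Real.norm_of_nonneg (mul_pos h13 h24).le]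
    ring
  refine LipschitzWith.of_dist_le_mul fun x y => ?_
  rw [Real.coe_toNNReal _ (by positivity), dist_eq_norm, dist_eq_norm, hsub, ← hnorm]
  exact ContinuousLinearMap.le_opNorm _ _

theorem stmt6 (dt ds : ℕ) (W : Matrix (Fin dt) (Fin ds) ℝ)
    (φ : EuclideanSpace ℝ (Fin dt)) (ψ : EuclideanSpace ℝ (Fin ds))
    (ω1 ω2 ω13 ω24 : ℝ) (h13 : 0 < ω13) (h24 : 0 < ω24)
    (hPD : (Matrix.fromBlocks (ω13 • (1 : Matrix (Fin dt) (Fin dt) ℝ)) (-W)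
      (-Wᵀ) (ω24 • (1 : Matrix (Fin ds) (Fin ds) ℝ))).PosDef)
    (T : EuclideanSpace ℝ (Fin ds) → EuclideanSpace ℝ (Fin ds))
    (hT : ∀ zs, T zs =
      ω24⁻¹ • (ω2 • ψ + toEuc (Wᵀ *ᵥ (ω13⁻¹ • (ω1 • φ + toEuc (W *ᵥ zs)))))) :
    LipschitzWith (Real.toNNReal (opNorm W ^ 2 / (ω13 * ω24))) T ∧
    opNorm W ^ 2 / (ω13 * ω24) < 1 ∧
    ∃! zs : EuclideanSpace ℝ (Fin ds), T zs = zs ∧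
      ∀ z0 : EuclideanSpace ℝ (Fin ds),
        Filter.Tendsto (fun k => T^[k] z0) Filter.atTop (nhds zs) := by
  have hLip := lipschitzWith_alternating_update W φ ψ h13 h24 hT
  have hlt : opNorm W ^ 2 / (ω13 * ω24) < 1 :=
    (div_lt_one (mul_pos h13 h24)).mpr (opNorm_sq_lt_of_posDef_fromBlocks W h13 h24 hPD)
  have hcontr : ContractingWith (Real.toNNReal (opNorm W ^ 2 / (ω13 * ω24))) T :=
    ⟨Real.toNNReal_lt_one.mpr hlt, hLip⟩
  refine ⟨hLip, hlt, ContractingWith.fixedPoint T hcontr,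
    ⟨hcontr.fixedPoint_isFixedPt, hcontr.tendsto_iterate_fixedPoint⟩,
    fun z hz => hcontr.fixedPoint_unique hz.1⟩
end

section
/- Let f: ℝ^{d_t} × ℝ^{d_s} → ℝ be defined by f(z_t, z_s) = z_tᵀ W z_s − (ω1/2)‖z_t − φ‖² − (ω2/2)‖z_s − ψ‖² − (ω3/2)‖z_t‖² − (ω4/2)‖z_s‖². If ω1+ω3 > 0, ω2+ω4 > 0, and ‖W‖²_op < (ω1+ω3)(ω2+ω4), then f is strictly concave, and its unique maximizer is (z_t*, z_s*) = H⁻¹ · (ω1 φ, ω2 ψ) where H = [[(ω1+ω3)I, -W], [-Wᵀ, (ω2+ω4)I]]. -/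
open Matrix

/-!
Write `Q(x, y) = a‖x‖² + b‖y‖² - 2 xᵀWy` with `a = ω1 + ω3`, `b = ω2 + ω4`; it is the quadratic
form of the block matrix `H`. Since `xᵀWy ≤ ‖W‖ ‖x‖ ‖y‖` and `‖W‖² < ab`, `Q` is positive definite,
so `H` is invertible and `z* = H⁻¹ (ω1 φ, ω2 ψ)` solves the stationarity equations of `f`.
Completing the square then gives `f p = f z* - Q(p - z*) / 2`, and both strict concavity and
strict maximality at `z*` follow from the positivity of `Q`.
-/

open Set

lemma norm_toLp_sq_eq_dotProduct {n : Type*} [Fintype n] (x : n → ℝ) :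
    ‖WithLp.toLp 2 x‖ ^ 2 = x ⬝ᵥ x := by
  rw [← real_inner_self_eq_norm_sq, EuclideanSpace.inner_eq_star_dotProduct]
  rfl

lemma dotProduct_mulVec_le_opNorm_mul {m n : ℕ} (W : Matrix (Fin m) (Fin n) ℝ)
    (x : Fin m → ℝ) (y : Fin n → ℝ) :
    x ⬝ᵥ W *ᵥ y ≤ opNorm W * ‖WithLp.toLp 2 x‖ * ‖WithLp.toLp 2 y‖ := by
  let A := LinearMap.toContinuousLinearMap (Matrix.toEuclideanLin W)
  have hxWy : x ⬝ᵥ W *ᵥ y = inner ℝ (WithLp.toLp 2 x) (A (WithLp.toLp 2 y)) := by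
    rw [EuclideanSpace.inner_eq_star_dotProduct, dotProduct_comm]
    rfl
  calc x ⬝ᵥ W *ᵥ y ≤ ‖WithLp.toLp 2 x‖ * ‖A (WithLp.toLp 2 y)‖ :=
        hxWy ▸ real_inner_le_norm _ _
    _ ≤ ‖WithLp.toLp 2 x‖ * (opNorm W * ‖WithLp.toLp 2 y‖) :=
        mul_le_mul_of_nonneg_left (A.le_opNorm _) (norm_nonneg _)
    _ = opNorm W * ‖WithLp.toLp 2 x‖ * ‖WithLp.toLp 2 y‖ := by ring

lemma sq_add_sq_sub_two_mul_pos {a b c u v : ℝ} (ha : 0 < a) (hb : 0 < b) (hc : c ^ 2 < a * b)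
    (huv : u ≠ 0 ∨ v ≠ 0) : 0 < a * u ^ 2 + b * v ^ 2 - 2 * c * u * v := by
  rcases huv with hu | hv
  · nlinarith [sq_nonneg (b * v - c * u), sq_pos_of_ne_zero hu]
  · nlinarith [sq_nonneg (a * u - c * v), sq_pos_of_ne_zero hv]

def blockQuadForm {m n : ℕ} (W : Matrix (Fin m) (Fin n) ℝ) (a b : ℝ)
    (p : (Fin m → ℝ) × (Fin n → ℝ)) : ℝ :=
  a * (p.1 ⬝ᵥ p.1) + b * (p.2 ⬝ᵥ p.2) - 2 * (p.1 ⬝ᵥ W *ᵥ p.2)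

section blockQuadForm

variable {m n : ℕ} (W : Matrix (Fin m) (Fin n) ℝ) {a b : ℝ}

lemma blockQuadForm_pos (ha : 0 < a) (hb : 0 < b) (hW : opNorm W ^ 2 < a * b)
    {p : (Fin m → ℝ) × (Fin n → ℝ)} (hp : p ≠ 0) : 0 < blockQuadForm W a b p := by
  obtain ⟨x, y⟩ := p
  have hxy : ‖WithLp.toLp 2 x‖ ≠ 0 ∨ ‖WithLp.toLp 2 y‖ ≠ 0 := by
    simp only [ne_eq, norm_eq_zero, WithLp.toLp_eq_zero]
    by_contra! h
    exact hp (Prod.ext h.1 h.2)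
  have hbound := mul_le_mul_of_nonneg_left (dotProduct_mulVec_le_opNorm_mul W x y) zero_le_two
  calc 0 < a * ‖WithLp.toLp 2 x‖ ^ 2 + b * ‖WithLp.toLp 2 y‖ ^ 2
        - 2 * opNorm W * ‖WithLp.toLp 2 x‖ * ‖WithLp.toLp 2 y‖ :=
        sq_add_sq_sub_two_mul_pos ha hb hW hxy
    _ ≤ blockQuadForm W a b (x, y) := by
      rw [norm_toLp_sq_eq_dotProduct, norm_toLp_sq_eq_dotProduct, blockQuadForm]
      linarith

lemma blockQuadForm_smul_add_smul (u v : (Fin m → ℝ) × (Fin n → ℝ)) {t s : ℝ} (hts : t + s = 1) :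
    blockQuadForm W a b (t • u + s • v) =
      t * blockQuadForm W a b u + s * blockQuadForm W a b v
        - t * s * blockQuadForm W a b (u - v) := by
  obtain rfl : s = 1 - t := by linarith
  simp only [blockQuadForm, Prod.fst_add, Prod.snd_add, Prod.smul_fst, Prod.smul_snd,
    Prod.fst_sub, Prod.snd_sub, mulVec_add, mulVec_smul, mulVec_sub, dotProduct_add,
    add_dotProduct, dotProduct_smul, smul_dotProduct, dotProduct_sub, sub_dotProduct,
    smul_eq_mul, dotProduct_comm v.1 u.1, dotProduct_comm v.2 u.2]
  ring

lemma strictConvexOn_blockQuadForm (ha : 0 < a) (hb : 0 < b) (hW : opNorm W ^ 2 < a * b) :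
    StrictConvexOn ℝ univ (blockQuadForm W a b) := by
  refine ⟨convex_univ, fun u _ v _ huv t s ht hs hts => ?_⟩
  have hpos := mul_pos (mul_pos ht hs) (blockQuadForm_pos W ha hb hW (sub_ne_zero.mpr huv))
  rw [blockQuadForm_smul_add_smul W u v hts, smul_eq_mul, smul_eq_mul]
  linarith

end blockQuadForm

lemma strictConcaveOn_of_eq_const_sub_half {E : Type*} [AddCommGroup E] [Module ℝ E]
    {f g : E → ℝ} (hg : StrictConvexOn ℝ univ g) {c : ℝ} {z : E}
    (hf : ∀ p, f p = c - g (p - z) / 2) : StrictConcaveOn ℝ univ f := by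
  refine ⟨convex_univ, fun x _ y _ hxy t s ht hs hts => ?_⟩
  have hcombo : t • x + s • y - z = t • (x - z) + s • (y - z) := by
    rw [smul_sub, smul_sub, sub_add_sub_comm, ← add_smul, hts, one_smul]
  have hc : t * c + s * c = c := by rw [← add_mul, hts, one_mul]
  have := hg.2 (mem_univ _) (mem_univ _) (sub_left_injective (b := z) |>.ne hxy) ht hs hts
  simp only [hf, hcombo, smul_eq_mul] at this ⊢
  linarith

section blockMatrix

variable {m n : ℕ} (W : Matrix (Fin m) (Fin n) ℝ) (a b : ℝ)

lemma dotProduct_fromBlocks_mulVec_self (v : Fin m ⊕ Fin n → ℝ) :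
    v ⬝ᵥ fromBlocks (a • 1) (-W) (-Wᵀ) (b • 1) *ᵥ v =
      blockQuadForm W a b (v ∘ Sum.inl, v ∘ Sum.inr) := by
  have hWt : v ∘ Sum.inr ⬝ᵥ Wᵀ *ᵥ v ∘ Sum.inl = v ∘ Sum.inl ⬝ᵥ W *ᵥ v ∘ Sum.inr := by
    rw [dotProduct_mulVec, vecMul_transpose, dotProduct_comm]
  rw [← Sum.elim_comp_inl_inr v, fromBlocks_mulVec, sumElim_dotProduct_sumElim]
  simp only [Sum.elim_comp_inl, Sum.elim_comp_inr, neg_mulVec, smul_mulVec, one_mulVec,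
    dotProduct_add, dotProduct_neg, dotProduct_smul, smul_eq_mul, hWt, blockQuadForm]
  ring

lemma posDef_fromBlocks {a b : ℝ} (ha : 0 < a) (hb : 0 < b) (hW : opNorm W ^ 2 < a * b) :
    (fromBlocks (a • 1) (-W) (-Wᵀ) (b • 1)).PosDef := by
  refine posDef_iff_dotProduct_mulVec.mpr ⟨?_, fun v hv => ?_⟩
  · exact IsHermitian.fromBlocks (by simp [IsHermitian]) (by simp) (by simp [IsHermitian])
  · rw [star_trivial, dotProduct_fromBlocks_mulVec_self]
    refine blockQuadForm_pos W ha hb hW fun h => hv ?_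
    rw [← Sum.elim_comp_inl_inr v, ← Sum.elim_zero_zero, Sum.elim_eq_iff]
    exact Prod.ext_iff.mp h

lemma fromBlocks_mulVec_eq_sumElim_iff (v : Fin m ⊕ Fin n → ℝ) (r : Fin m → ℝ) (s : Fin n → ℝ) :
    fromBlocks (a • 1) (-W) (-Wᵀ) (b • 1) *ᵥ v = Sum.elim r s ↔
      a • v ∘ Sum.inl - W *ᵥ v ∘ Sum.inr = r ∧ b • v ∘ Sum.inr - Wᵀ *ᵥ v ∘ Sum.inl = s := by
  rw [fromBlocks_mulVec, Sum.elim_eq_iff]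
  simp only [neg_mulVec, smul_mulVec, one_mulVec, sub_eq_add_neg, add_comm (-(Wᵀ *ᵥ _))]

end blockMatrix

noncomputable def adaptiveSimilarity {m n : ℕ} (W : Matrix (Fin m) (Fin n) ℝ) (φ : Fin m → ℝ)
    (ψ : Fin n → ℝ) (ω1 ω2 ω3 ω4 : ℝ) (p : (Fin m → ℝ) × (Fin n → ℝ)) : ℝ :=
  p.1 ⬝ᵥ W *ᵥ p.2 - ω1 / 2 * ((p.1 - φ) ⬝ᵥ (p.1 - φ)) - ω2 / 2 * ((p.2 - ψ) ⬝ᵥ (p.2 - ψ))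
    - ω3 / 2 * (p.1 ⬝ᵥ p.1) - ω4 / 2 * (p.2 ⬝ᵥ p.2)

lemma adaptiveSimilarity_eq_sub_blockQuadForm {m n : ℕ} (W : Matrix (Fin m) (Fin n) ℝ)
    (φ : Fin m → ℝ) (ψ : Fin n → ℝ) (ω1 ω2 ω3 ω4 : ℝ) {z : (Fin m → ℝ) × (Fin n → ℝ)}
    (hz1 : (ω1 + ω3) • z.1 - W *ᵥ z.2 = ω1 • φ) (hz2 : (ω2 + ω4) • z.2 - Wᵀ *ᵥ z.1 = ω2 • ψ)
    (p : (Fin m → ℝ) × (Fin n → ℝ)) :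
    adaptiveSimilarity W φ ψ ω1 ω2 ω3 ω4 p = adaptiveSimilarity W φ ψ ω1 ω2 ω3 ω4 z
      - blockQuadForm W (ω1 + ω3) (ω2 + ω4) (p - z) / 2 := by
  obtain ⟨x, y⟩ := p
  obtain ⟨x₀, y₀⟩ := z
  have e1 := congrArg ((x - x₀) ⬝ᵥ ·) hz1
  have e2 := congrArg ((y - y₀) ⬝ᵥ ·) hz2
  have hWt (u : Fin n → ℝ) (v : Fin m → ℝ) : u ⬝ᵥ Wᵀ *ᵥ v = v ⬝ᵥ W *ᵥ u := by
    rw [dotProduct_mulVec, vecMul_transpose, dotProduct_comm]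
  simp only [adaptiveSimilarity, blockQuadForm, Prod.fst_sub, Prod.snd_sub, hWt, mulVec_sub,
    dotProduct_sub, sub_dotProduct, dotProduct_smul, smul_eq_mul, dotProduct_comm φ,
    dotProduct_comm ψ, dotProduct_comm x₀ x, dotProduct_comm y₀ y] at e1 e2 ⊢
  linear_combination -e1 - e2

theorem stmt9_general (dt ds : ℕ) (W : Matrix (Fin dt) (Fin ds) ℝ)
    (φ : Fin dt → ℝ) (ψ : Fin ds → ℝ) (ω1 ω2 ω3 ω4 : ℝ)
    (h13 : 0 < ω1 + ω3) (h24 : 0 < ω2 + ω4)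
    (hW : opNorm W ^ 2 < (ω1 + ω3) * (ω2 + ω4))
    (f : (Fin dt → ℝ) × (Fin ds → ℝ) → ℝ)
    (hf : ∀ p, f p =
      p.1 ⬝ᵥ W *ᵥ p.2 - ω1 / 2 * ((p.1 - φ) ⬝ᵥ (p.1 - φ))
        - ω2 / 2 * ((p.2 - ψ) ⬝ᵥ (p.2 - ψ))
        - ω3 / 2 * (p.1 ⬝ᵥ p.1) - ω4 / 2 * (p.2 ⬝ᵥ p.2))
    (H : Matrix (Fin dt ⊕ Fin ds) (Fin dt ⊕ Fin ds) ℝ)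
    (hH : H = Matrix.fromBlocks ((ω1 + ω3) • (1 : Matrix (Fin dt) (Fin dt) ℝ)) (-W)
      (-Wᵀ) ((ω2 + ω4) • (1 : Matrix (Fin ds) (Fin ds) ℝ)))
    (zstar : Fin dt ⊕ Fin ds → ℝ)
    (hz : zstar = H⁻¹ *ᵥ Sum.elim (ω1 • φ) (ω2 • ψ)) :
    StrictConcaveOn ℝ Set.univ f ∧
    ∀ p : (Fin dt → ℝ) × (Fin ds → ℝ),
      p ≠ (fun i => zstar (Sum.inl i), fun j => zstar (Sum.inr j)) →
      f p < f (fun i => zstar (Sum.inl i), fun j => zstar (Sum.inr j)) := by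
  obtain rfl : f = adaptiveSimilarity W φ ψ ω1 ω2 ω3 ω4 := funext hf
  have hH_unit : IsUnit H.det :=
    (isUnit_iff_isUnit_det H).mp (hH ▸ posDef_fromBlocks W h13 h24 hW).isUnit
  have hstationary : H *ᵥ zstar = Sum.elim (ω1 • φ) (ω2 • ψ) := by
    rw [hz, mulVec_mulVec, mul_nonsing_inv H hH_unit, one_mulVec]
  obtain ⟨hz1, hz2⟩ := (fromBlocks_mulVec_eq_sumElim_iff W _ _ zstar _ _).mp (hH ▸ hstationary)
  have hsq := adaptiveSimilarity_eq_sub_blockQuadForm W φ ψ ω1 ω2 ω3 ω4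
    (z := (fun i => zstar (Sum.inl i), fun j => zstar (Sum.inr j))) hz1 hz2
  refine ⟨strictConcaveOn_of_eq_const_sub_half (strictConvexOn_blockQuadForm W h13 h24 hW) hsq,
    fun p hp => ?_⟩
  have := blockQuadForm_pos W h13 h24 hW (sub_ne_zero.mpr hp)
  rw [hsq p]
  linarith

theorem stmt9 (dt ds : ℕ) (W : Matrix (Fin dt) (Fin ds) ℝ)
    (φ : Fin dt → ℝ) (ψ : Fin ds → ℝ) (ω1 ω2 ω3 ω4 : ℝ)
    (h1 : 0 ≤ ω1) (h2 : 0 ≤ ω2) (h3 : 0 ≤ ω3) (h4 : 0 ≤ ω4)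
    (h13 : 0 < ω1 + ω3) (h24 : 0 < ω2 + ω4)
    (hW : opNorm W ^ 2 < (ω1 + ω3) * (ω2 + ω4))
    (f : (Fin dt → ℝ) × (Fin ds → ℝ) → ℝ)
    (hf : ∀ p, f p =
      p.1 ⬝ᵥ W *ᵥ p.2 - ω1 / 2 * ((p.1 - φ) ⬝ᵥ (p.1 - φ))
        - ω2 / 2 * ((p.2 - ψ) ⬝ᵥ (p.2 - ψ))
        - ω3 / 2 * (p.1 ⬝ᵥ p.1) - ω4 / 2 * (p.2 ⬝ᵥ p.2))
    (H : Matrix (Fin dt ⊕ Fin ds) (Fin dt ⊕ Fin ds) ℝ)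
    (hH : H = Matrix.fromBlocks ((ω1 + ω3) • (1 : Matrix (Fin dt) (Fin dt) ℝ)) (-W)
      (-Wᵀ) ((ω2 + ω4) • (1 : Matrix (Fin ds) (Fin ds) ℝ)))
    (zstar : Fin dt ⊕ Fin ds → ℝ)
    (hz : zstar = H⁻¹ *ᵥ Sum.elim (ω1 • φ) (ω2 • ψ)) :
    StrictConcaveOn ℝ Set.univ f ∧
    ∀ p : (Fin dt → ℝ) × (Fin ds → ℝ),
      p ≠ (fun i => zstar (Sum.inl i), fun j => zstar (Sum.inr j)) →
      f p < f (fun i => zstar (Sum.inl i), fun j => zstar (Sum.inr j)) :=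
  stmt9_general dt ds W φ ψ ω1 ω2 ω3 ω4 h13 h24 hW f hf H hH zstar hz
end
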